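/- Let Q = LᵀL be symmetric positive definite (L invertible), and let H ∈ ℝ^{n×n²} satisfy xᵀQH(x⊗x) = 0 for all x ∈ ℝⁿ. Then there exist skew-symmetric matrices G₁, ..., Gₙ ∈ ℝ^{n×n} such that H(x⊗x) = [G₁Q, ..., GₙQ](x⊗x) for all x ∈ ℝⁿ. -/

import Mathlib

/-!
`M = QH` is energy-preserving in the ordinary sense, `xᵀM(x⊗x) = 0`. Polarizing this cubic identity
shows that the full symmetrization of the coefficient tensor `M j (i, k)` vanishes, and this is
exactly what makes the skew-symmetric matrices
`(Ĝᵢ) j k = (M j (i,k) + M j (k,i) - M k (i,j) - M k (j,i)) / 3` reproduce the quadratic forms,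
`M(x⊗x) = Σᵢ xᵢ Ĝᵢ x`. As `Q` is symmetric and invertible, `Gᵢ = Q⁻¹ĜᵢQ⁻¹` is skew-symmetric with
`GᵢQ = Q⁻¹Ĝᵢ`, and `H(x⊗x) = Q⁻¹M(x⊗x)`.
-/

open Matrix

variable {R ι : Type*} [Fintype ι]

section CommRing

variable [CommRing R]

def trilinearForm (M : Matrix ι (ι × ι) R) (a b c : ι → R) : R :=
  a ⬝ᵥ M *ᵥ fun p => b p.1 * c p.2

lemma trilinearForm_eq_sum (M : Matrix ι (ι × ι) R) (a b c : ι → R) :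
    trilinearForm M a b c = ∑ j, ∑ i, ∑ k, M j (i, k) * a j * b i * c k := by
  simp only [trilinearForm, dotProduct, mulVec, Fintype.sum_prod_type, Finset.mul_sum]
  exact Fintype.sum_congr _ _ fun j => Fintype.sum_congr _ _ fun i =>
    Fintype.sum_congr _ _ fun k => by ring

lemma trilinearForm_add_left (M : Matrix ι (ι × ι) R) (u v b c : ι → R) :
    trilinearForm M (u + v) b c = trilinearForm M u b c + trilinearForm M v b c := by
  simp only [trilinearForm_eq_sum, Pi.add_apply, mul_add, add_mul, Finset.sum_add_distrib]

lemma trilinearForm_add_mid (M : Matrix ι (ι × ι) R) (a u v c : ι → R) :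
    trilinearForm M a (u + v) c = trilinearForm M a u c + trilinearForm M a v c := by
  simp only [trilinearForm_eq_sum, Pi.add_apply, mul_add, add_mul, Finset.sum_add_distrib]

lemma trilinearForm_add_right (M : Matrix ι (ι × ι) R) (a b u v : ι → R) :
    trilinearForm M a b (u + v) = trilinearForm M a b u + trilinearForm M a b v := by
  simp only [trilinearForm_eq_sum, Pi.add_apply, mul_add, Finset.sum_add_distrib]

lemma trilinearForm_single [DecidableEq ι] (M : Matrix ι (ι × ι) R) (j i k : ι) :
    trilinearForm M (Pi.single j 1) (Pi.single i 1) (Pi.single k 1) = M j (i, k) := by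
  simp [trilinearForm_eq_sum, Pi.single_apply]

lemma sum_perm_eq_zero_of_trilinearForm_self_eq_zero (M : Matrix ι (ι × ι) R)
    (hM : ∀ x, trilinearForm M x x x = 0) (i j k : ι) :
    M i (j, k) + M i (k, j) + M j (i, k) + M j (k, i) + M k (i, j) + M k (j, i) = 0 := by
  classical
  set a : ι → R := Pi.single i 1
  set b : ι → R := Pi.single j 1
  set c : ι → R := Pi.single k 1
  have habc := hM (a + b + c)
  have hab := hM (a + b)
  have hac := hM (a + c)
  have hbc := hM (b + c)
  have ha := hM a
  have hb := hM b
  have hc := hM c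
  simp only [trilinearForm_add_left, trilinearForm_add_mid, trilinearForm_add_right, a, b, c,
    trilinearForm_single] at habc hab hac hbc ha hb hc
  linear_combination habc - hab - hac - hbc + ha + hb + hc

lemma mulVec_outer_apply (M : Matrix ι (ι × ι) R) (x : ι → R) (j : ι) :
    (M *ᵥ fun p => x p.1 * x p.2) j = x ⬝ᵥ (of fun i k => M j (i, k)) *ᵥ x := by
  simp only [mulVec, dotProduct, Fintype.sum_prod_type, of_apply, Finset.mul_sum]
  exact Fintype.sum_congr _ _ fun i => Fintype.sum_congr _ _ fun k => by ring

lemma sum_smul_mulVec_apply (G : ι → Matrix ι ι R) (x : ι → R) (j : ι) :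
    (∑ i, x i • G i *ᵥ x) j = x ⬝ᵥ (of fun i k => G i j k) *ᵥ x := by
  simp only [Finset.sum_apply, Pi.smul_apply, smul_eq_mul, mulVec, dotProduct, of_apply,
    Finset.mul_sum]

end CommRing

section Field

variable [Field R] [CharZero R]

lemma dotProduct_mulVec_self_eq_of_add_transpose_eq {A B : Matrix ι ι R}
    (h : A + Aᵀ = B + Bᵀ) (x : ι → R) : x ⬝ᵥ A *ᵥ x = x ⬝ᵥ B *ᵥ x := by
  have htranspose : ∀ C : Matrix ι ι R, x ⬝ᵥ Cᵀ *ᵥ x = x ⬝ᵥ C *ᵥ x := fun C => by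
    rw [dotProduct_mulVec, vecMul_transpose, dotProduct_comm]
  have hsum : x ⬝ᵥ (A + Aᵀ) *ᵥ x = x ⬝ᵥ (B + Bᵀ) *ᵥ x := by rw [h]
  simp only [add_mulVec, dotProduct_add, htranspose] at hsum
  linear_combination hsum / 2

theorem exists_skew_representation_of_energy_preserving (M : Matrix ι (ι × ι) R)
    (hM : ∀ x, x ⬝ᵥ M *ᵥ (fun p => x p.1 * x p.2) = 0) :
    ∃ G : ι → Matrix ι ι R, (∀ i, (G i)ᵀ = -G i) ∧
      ∀ x, M *ᵥ (fun p => x p.1 * x p.2) = ∑ i, x i • G i *ᵥ x := by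
  have hsym := sum_perm_eq_zero_of_trilinearForm_self_eq_zero M hM
  refine ⟨fun i => of fun j k => (M j (i, k) + M j (k, i) - M k (i, j) - M k (j, i)) / 3,
    fun i => ?_, fun x => ?_⟩
  · ext j k
    simp only [transpose_apply, of_apply, Matrix.neg_apply]
    ring
  · funext j
    rw [mulVec_outer_apply, sum_smul_mulVec_apply]
    refine dotProduct_mulVec_self_eq_of_add_transpose_eq ?_ x
    ext i k
    simp only [Matrix.add_apply, transpose_apply, of_apply]
    linear_combination hsym j i k / 3

end Field

/-- Every generalized energy-preserving `H` w.r.t. `Q = LᵀL` (with `L`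
invertible) admits an equivalent representation with blocks `GᵢQ`, `Gᵢ`
skew-symmetric. -/
theorem stmt_12 (n : ℕ) (L : Matrix (Fin n) (Fin n) ℝ) (hL : IsUnit L.det)
    (H : Matrix (Fin n) (Fin n × Fin n) ℝ)
    (hH : ∀ x : Fin n → ℝ,
      x ⬝ᵥ (Lᵀ * L).mulVec (H.mulVec (fun p => x p.1 * x p.2)) = 0) :
    ∃ G : Fin n → Matrix (Fin n) (Fin n) ℝ,
      (∀ i, (G i)ᵀ = -(G i)) ∧
      ∀ x : Fin n → ℝ,
        H.mulVec (fun p => x p.1 * x p.2)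
          = ∑ i, x i • ((G i) * (Lᵀ * L)).mulVec x := by
  set Q := Lᵀ * L
  have hQ : IsUnit Q.det := by simpa [Q, det_mul] using hL.mul hL
  have hQinv : (Q⁻¹)ᵀ = Q⁻¹ := by simp [Q, transpose_nonsing_inv]
  obtain ⟨G, hskew, hrep⟩ :=
    exists_skew_representation_of_energy_preserving (Q * H) (by simpa [mulVec_mulVec] using hH)
  refine ⟨fun i => Q⁻¹ * G i * Q⁻¹, fun i => ?_, fun x => ?_⟩
  · simp [transpose_mul, hQinv, hskew, Matrix.mul_assoc]
  · calc H *ᵥ (fun p => x p.1 * x p.2)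
        = Q⁻¹ *ᵥ ((Q * H) *ᵥ fun p => x p.1 * x p.2) := by
          rw [mulVec_mulVec, ← Matrix.mul_assoc, nonsing_inv_mul Q hQ, Matrix.one_mul]
      _ = ∑ i, x i • (Q⁻¹ * G i * Q⁻¹ * Q) *ᵥ x := by
          simp only [hrep, mulVec_sum, mulVec_smul, mulVec_mulVec, Matrix.mul_assoc,
            nonsing_inv_mul Q hQ, Matrix.mul_one]
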